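/- The Amice transform μ ↦ A_μ(T) = Σ_{n≥0} (∫_{Z_p} C(x,n) dμ(x)) T^n is an isometric isomorphism from the Banach space M(Z_p, C_p) of bounded measures on Z_p (with the operator norm) onto the Banach space C_p{{T}} of power series with bounded coefficients (with the sup norm of coefficients). -/

import Mathlib

open Finset Filter PadicInt
open scoped fwdDiff Topology

section Stmt5Aux

variable {p : ℕ} [hp : Fact p.Prime]

private lemma stmt5_descPoch_coe (n : ℕ) (x : ℤ_[p]) :
    (((descPochhammer ℤ n).smeval x : ℤ_[p]) : ℚ_[p])
      = ∏ i ∈ Finset.range n, ((x : ℚ_[p]) - (i : ℚ_[p])) := by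
  induction n with
  | zero => simp [descPochhammer_zero, Polynomial.smeval_one]
  | succ n ih =>
      rw [descPochhammer_succ_right, Polynomial.smeval_mul, Finset.prod_range_succ, ← ih,
        Polynomial.smeval_sub, Polynomial.smeval_X, Polynomial.smeval_natCast]
      push_cast [nsmul_eq_mul]
      ring

private lemma stmt5_mahler_eq (n : ℕ) (x : ℤ_[p]) :
    (mahler n x : ℚ_[p])
      = (∏ i ∈ Finset.range n, ((x : ℚ_[p]) - (i : ℚ_[p]))) / (n.factorial : ℚ_[p]) := by
  have hfac : (n.factorial : ℚ_[p]) ≠ 0 := by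
    exact_mod_cast n.factorial_ne_zero
  rw [eq_div_iff hfac, mahler_apply]
  calc ((Ring.choose x n : ℤ_[p]) : ℚ_[p]) * (n.factorial : ℚ_[p])
      = ((n.factorial • Ring.choose x n : ℤ_[p]) : ℚ_[p]) := by
        push_cast [nsmul_eq_mul]; ring
    _ = (((descPochhammer ℤ n).smeval x : ℤ_[p]) : ℚ_[p]) := by
        rw [Ring.descPochhammer_eq_factorial_smul_choose]
    _ = _ := stmt5_descPoch_coe n x

end Stmt5Aux

/-- The Amice transform `μ ↦ Σ_n (∫ C(x,n) dμ) Tⁿ` is an isometric isomorphism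
from the Banach space `M(ℤ_p, C_p)` of bounded measures on `ℤ_p` (bounded linear functionals
on `C(ℤ_p, C_p)` with the operator norm) onto the Banach space of power series with bounded
coefficients (realized as bounded sequences `ℕ →ᵇ C_p` with the sup norm of coefficients). -/
theorem stmt_5 (p : ℕ) [Fact p.Prime] {C : Type*} [NontriviallyNormedField C] [NormedAlgebra ℚ_[p] C]
    [CompleteSpace C] [IsUltrametricDist C]
    (b : ℕ → C(ℤ_[p], C))
    (hb : ∀ (n : ℕ) (x : ℤ_[p]), b n x
      = algebraMap ℚ_[p] C ((∏ i ∈ Finset.range n, ((x : ℚ_[p]) - (i : ℚ_[p])))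
          / (n.factorial : ℚ_[p]))) :
    ∃ A : (C(ℤ_[p], C) →L[C] C) ≃ₗᵢ[C] BoundedContinuousFunction ℕ C,
      ∀ (μ : C(ℤ_[p], C) →L[C] C) (n : ℕ), A μ n = μ (b n) := by
  classical
  letI : Module ℤ_[p] C := Module.compHom C (algebraMap ℤ_[p] ℚ_[p])
  haveI : IsBoundedSMul ℤ_[p] C := IsBoundedSMul.of_norm_smul_le fun r x => by
    show ‖(r : ℚ_[p]) • x‖ ≤ ‖(r : ℚ_[p])‖ * ‖x‖
    exact norm_smul_le _ _
  have hsm : ∀ (r : ℤ_[p]) (a : C), r • a = (r : ℚ_[p]) • a := fun _ _ => rfl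
  -- `b n` is the Mahler basis function, and scalar multiples of it are Mahler terms
  have hbm : ∀ (a : C) (n : ℕ), a • b n = PadicInt.mahlerTerm a n := by
    intro a n
    ext x
    rw [ContinuousMap.smul_apply, smul_eq_mul, hb, PadicInt.mahlerTerm_apply, hsm,
      Algebra.smul_def, stmt5_mahler_eq, mul_comm]
  have hbnorm : ∀ n, ‖b n‖ = 1 := by
    intro n
    rw [← one_smul C (b n), hbm, PadicInt.norm_mahlerTerm, norm_one]
  -- applying a functional to the Mahler expansion of `f`
  have hsum : ∀ (μ : C(ℤ_[p], C) →L[C] C) (f : C(ℤ_[p], C)),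
      HasSum (fun n => Δ_[1] ^[n] f 0 * μ (b n)) (μ f) := by
    intro μ f
    have h := (PadicInt.hasSum_mahler f).mapL μ
    simpa only [Function.comp_def, ← hbm, map_smul, smul_eq_mul] using h
  -- summability of the pairing of a bounded sequence against Mahler coefficients
  have hsummable : ∀ (a : BoundedContinuousFunction ℕ C) (f : C(ℤ_[p], C)),
      Summable (fun n => Δ_[1] ^[n] f 0 * a n) := by
    intro a f
    apply NonarchimedeanAddGroup.summable_of_tendsto_cofinite_zero
    rw [Nat.cofinite_eq_atTop, tendsto_zero_iff_norm_tendsto_zero]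
    have hle : ∀ n, ‖Δ_[1] ^[n] f 0 * a n‖ ≤ ‖Δ_[1] ^[n] f 0‖ * ‖a‖ := by
      intro n
      rw [_root_.norm_mul]
      exact mul_le_mul_of_nonneg_left (a.norm_coe_le_norm n) (norm_nonneg _)
    refine squeeze_zero (fun n => norm_nonneg _) hle ?_
    have h1 : Tendsto (fun n => ‖Δ_[1] ^[n] f 0‖) atTop (𝓝 0) :=
      tendsto_zero_iff_norm_tendsto_zero.mp (PadicInt.fwdDiff_tendsto_zero f)
    simpa using h1.mul_const ‖a‖
  -- Mahler coefficients of `b n` are a delta sequence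
  have hdelta : ∀ n k : ℕ, Δ_[1] ^[k] (b n) 0 = (Pi.single n (1 : C) : ℕ → C) k := by
    intro n k
    have hten : Tendsto (Pi.single n (1 : C) : ℕ → C) atTop (𝓝 0) := by
      refine tendsto_const_nhds.congr' ?_
      filter_upwards [eventually_gt_atTop n] with m hm
      exact (Pi.single_eq_of_ne (M := fun _ : ℕ => C) hm.ne' 1).symm
    have hsingle : HasSum
        (fun k => PadicInt.mahlerTerm ((Pi.single n (1 : C) : ℕ → C) k) k) (b n) := by
      have h := hasSum_single (f := fun k =>
          PadicInt.mahlerTerm (p := p) ((Pi.single n (1 : C) : ℕ → C) k) k) n ?_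
      · simpa only [Pi.single_eq_same, ← hbm, one_smul] using h
      · intro k hk
        show PadicInt.mahlerTerm (p := p) ((Pi.single n (1 : C) : ℕ → C) k) k = 0
        rw [Pi.single_eq_of_ne hk, ← hbm, zero_smul]
    have hms : PadicInt.mahlerSeries (p := p) (Pi.single n (1 : C)) = b n := hsingle.tsum_eq
    rw [← hms]
    exact PadicInt.fwdDiff_mahlerSeries hten k
  -- the forward map
  let A0 : (C(ℤ_[p], C) →L[C] C) → BoundedContinuousFunction ℕ C := fun μ =>
    BoundedContinuousFunction.ofNormedAddCommGroup (fun n => μ (b n))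
      continuous_of_discreteTopology ‖μ‖
      (fun n => by simpa [hbnorm n] using μ.le_opNorm (b n))
  -- the inverse map
  let B0 : BoundedContinuousFunction ℕ C → (C(ℤ_[p], C) →L[C] C) := fun a =>
    LinearMap.mkContinuous
      { toFun := fun f => ∑' n, Δ_[1] ^[n] f 0 * a n
        map_add' := fun f g => by
          simp only [ContinuousMap.coe_add, fwdDiff_iter_add, Pi.add_apply, add_mul]
          exact Summable.tsum_add (hsummable a f) (hsummable a g)
        map_smul' := fun c f => by
          simp only [ContinuousMap.coe_smul, fwdDiff_iter_const_smul, Pi.smul_apply,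
            smul_eq_mul, RingHom.id_apply, mul_assoc]
          exact tsum_mul_left }
      ‖a‖
      (fun f => by
        refine IsUltrametricDist.norm_tsum_le_of_forall_le_of_nonneg (by positivity)
          (fun n => ?_)
        rw [_root_.norm_mul, mul_comm ‖a‖ ‖f‖]
        exact mul_le_mul (IsUltrametricDist.norm_fwdDiff_iter_apply_le 1 f 0 n)
          (a.norm_coe_le_norm n) (norm_nonneg _) (norm_nonneg f))
  let E1 : (C(ℤ_[p], C) →L[C] C) ≃ₗ[C] BoundedContinuousFunction ℕ C :=
    { toFun := A0
      map_add' := fun μ ν => by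
        ext n
        simp [A0]
      map_smul' := fun c μ => by
        ext n
        simp [A0]
      invFun := B0
      left_inv := fun μ => by
        ext f
        exact (hsum μ f).tsum_eq
      right_inv := fun a => by
        ext n
        show (∑' k, Δ_[1] ^[k] (b n) 0 * a k) = a n
        have h1 : (fun k => Δ_[1] ^[k] (b n) 0 * a k)
            = fun k => (Pi.single n (1 : C) : ℕ → C) k * a k := by
          funext k; rw [hdelta]
        rw [h1, tsum_eq_single n (fun k hk => by rw [Pi.single_eq_of_ne hk, zero_mul]),
          Pi.single_eq_same, one_mul] }
  refine ⟨{ toLinearEquiv := E1,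
            norm_map' := fun μ => by
              apply le_antisymm
              · exact BoundedContinuousFunction.norm_ofNormedAddCommGroup_le _ (norm_nonneg μ)
                  (fun n => by simpa [hbnorm n] using μ.le_opNorm (b n))
              · refine μ.opNorm_le_bound (norm_nonneg _) (fun f => ?_)
                rw [← (hsum μ f).tsum_eq]
                refine IsUltrametricDist.norm_tsum_le_of_forall_le_of_nonneg (by positivity)
                  (fun n => ?_)
                rw [_root_.norm_mul, mul_comm ‖Δ_[1] ^[n] f 0‖ _]
                exact mul_le_mul ((A0 μ).norm_coe_le_norm n)
                  (IsUltrametricDist.norm_fwdDiff_iter_apply_le 1 f 0 n) (norm_nonneg _)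
                  (norm_nonneg _) },
    fun μ n => rfl⟩
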